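/- For every real q with 0 < q < 1: Σ_{a,b∈ℤ} q^{3(a+1/3)²+6(b+1/3)²} = (1/4)·(Σ_{m∈ℤ} q^{m²/3} − Σ_{m∈ℤ} q^{3m²})·(Σ_{m∈ℤ} q^{2m²/3} − Σ_{m∈ℤ} q^{6m²}), i.e. θ₃ = (1/4)(ϑ₃(τ/3) − ϑ₃(3τ))·(ϑ₃(2τ/3) − ϑ₃(6τ)) where q = e^{πiτ}. -/

import Mathlib

/-!
Split `m ∈ ℤ` by its residue mod 3: the terms `m = 3a` of `Σ q^{c m²/3}` give `Σ q^{3c a²}`, and the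
classes `m = 3a + 1` and `m = 3a + 2` are exchanged by `m ↦ -m`, so each contributes
`Σ q^{3c (a+1/3)²}`. With `c = 1` and `c = 2` this gives
`ϑ₃(τ/3) - ϑ₃(3τ) = 2 Σ_a q^{3(a+1/3)²}` and `ϑ₃(2τ/3) - ϑ₃(6τ) = 2 Σ_b q^{6(b+1/3)²}`,
and the double sum defining `θ₃` factors as the product of these two single sums.
-/

theorem HasSum.sum_fin_residues {α : Type*} [AddCommMonoid α] [TopologicalSpace α]
    [ContinuousAdd α] [RegularSpace α] {f : ℤ → α} {a : α} (hf : HasSum f a) (n : ℕ) [NeZero n] :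
    HasSum (fun k : ℤ => ∑ j : Fin n, f (k * n + j)) a :=
  ((Int.divModEquiv n).symm.hasSum_iff.mpr hf).prod_fiberwise fun _ => hasSum_fintype _

section

variable {q : ℝ}

theorem summable_rpow_mul_add_sq (h0 : 0 < q) (h1 : q < 1) {c : ℝ} (hc : 0 < c) (d : ℝ) :
    Summable fun m : ℤ => q ^ (c * ((m : ℝ) + d) ^ 2) := by
  set r := q ^ (c / 2)
  have hr1 : r < 1 := Real.rpow_lt_one h0.le h1 (by positivity)
  have hgeom : Summable fun m : ℤ => r ^ m.natAbs := by
    apply Summable.of_nat_of_neg <;> simpa using summable_geometric_of_lt_one (by positivity) hr1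
  refine (hgeom.mul_left (q ^ (-(c * d ^ 2)))).of_nonneg_of_le (fun _ => by positivity) fun m => ?_
  have hm : (m.natAbs : ℝ) ≤ (m : ℝ) ^ 2 := by
    rw [Nat.cast_natAbs]; exact_mod_cast Int.natAbs_le_self_sq m
  -- `(m + d)² + d² = m²/2 + (m + 2d)²/2`
  have hexp : -(c * d ^ 2) + c / 2 * m.natAbs ≤ c * ((m : ℝ) + d) ^ 2 := by
    nlinarith [sq_nonneg ((m : ℝ) + 2 * d)]
  calc q ^ (c * ((m : ℝ) + d) ^ 2)
      ≤ q ^ (-(c * d ^ 2) + c / 2 * m.natAbs) := Real.rpow_le_rpow_of_exponent_ge h0 h1.le hexp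
    _ = q ^ (-(c * d ^ 2)) * r ^ m.natAbs := by
      rw [Real.rpow_add h0, Real.rpow_mul h0.le, Real.rpow_natCast]

theorem tsum_rpow_mul_sq_div_three (h0 : 0 < q) (h1 : q < 1) {c : ℝ} (hc : 0 < c) :
    ∑' m : ℤ, q ^ (c * (m : ℝ) ^ 2 / 3) =
      ∑' a : ℤ, q ^ (3 * c * (a : ℝ) ^ 2) + 2 * ∑' a : ℤ, q ^ (3 * c * ((a : ℝ) + 1/3) ^ 2) := by
  have hresidues := (summable_rpow_mul_add_sq h0 h1 (div_pos hc three_pos) 0).hasSum.sum_fin_residues 3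
  have hsum (d : ℝ) := (summable_rpow_mul_add_sq h0 h1 (by positivity : 0 < 3 * c) d).hasSum
  have hclasses := ((hsum 0).add (hsum (1/3))).add
    ((Equiv.subLeft (-1 : ℤ)).hasSum_iff.mpr (hsum (1/3)))
  simp only [add_zero] at hresidues hclasses
  -- the class `3k + 2` is the reflection `k ↦ -1 - k` of the class `3k + 1`
  have hterms : (fun k : ℤ => ∑ j : Fin 3, q ^ (c / 3 * ((k * 3 + j : ℤ) : ℝ) ^ 2)) =
      fun k : ℤ => q ^ (3 * c * (k : ℝ) ^ 2) + q ^ (3 * c * ((k : ℝ) + 1/3) ^ 2) +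
        q ^ (3 * c * (((-1 - k : ℤ) : ℝ) + 1/3) ^ 2) := by
    ext k
    simp only [Fin.sum_univ_three, Fin.val_zero, Fin.val_one, Fin.val_two]
    push_cast
    ring_nf
  calc ∑' m : ℤ, q ^ (c * (m : ℝ) ^ 2 / 3) = ∑' m : ℤ, q ^ (c / 3 * (m : ℝ) ^ 2) := by ring_nf
    _ = _ := (hterms ▸ hresidues).unique hclasses
    _ = _ := by ring

end

/-- For `0 < q < 1`:
`θ₃ = Σ_{a,b∈ℤ} q^{3(a+1/3)²+6(b+1/3)²} = (1/4)(ϑ₃(τ/3) − ϑ₃(3τ))·(ϑ₃(2τ/3) − ϑ₃(6τ))`. -/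
theorem theta3_eq (q : ℝ) (h0 : 0 < q) (h1 : q < 1) :
    (∑' p : ℤ × ℤ, q ^ (3 * ((p.1 : ℝ) + 1/3) ^ 2 + 6 * ((p.2 : ℝ) + 1/3) ^ 2)) =
      (1 / 4) * ((∑' m : ℤ, q ^ ((m : ℝ) ^ 2 / 3)) - ∑' m : ℤ, q ^ (3 * (m : ℝ) ^ 2)) *
        ((∑' m : ℤ, q ^ (2 * (m : ℝ) ^ 2 / 3)) - ∑' m : ℤ, q ^ (6 * (m : ℝ) ^ 2)) := by
  have h3 : ∑' m : ℤ, q ^ ((m : ℝ) ^ 2 / 3) =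
      ∑' a : ℤ, q ^ (3 * (a : ℝ) ^ 2) + 2 * ∑' a : ℤ, q ^ (3 * ((a : ℝ) + 1/3) ^ 2) := by
    simpa using tsum_rpow_mul_sq_div_three h0 h1 one_pos
  have h6 : ∑' m : ℤ, q ^ (2 * (m : ℝ) ^ 2 / 3) =
      ∑' a : ℤ, q ^ (6 * (a : ℝ) ^ 2) + 2 * ∑' a : ℤ, q ^ (6 * ((a : ℝ) + 1/3) ^ 2) := by
    norm_num [tsum_rpow_mul_sq_div_three h0 h1 two_pos]
  have hA := summable_rpow_mul_add_sq h0 h1 three_pos (1/3)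
  have hB := summable_rpow_mul_add_sq h0 h1 (by norm_num : (0 : ℝ) < 6) (1/3)
  have hprod := hA.tsum_mul_tsum hB
    (hA.mul_of_nonneg hB (fun _ => by positivity) fun _ => by positivity)
  simp only [← Real.rpow_add h0] at hprod
  rw [← hprod, h3, h6]
  ring
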